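/- A real Banach space X has the λ-bounded approximation property (λ-BAP) if and only if X has the approximation property (AP) and the λ-bounded compact approximation property (λ-BCAP). -/

import Mathlib

set_option maxSynthPendingDepth 3

open Filter Topology Metric NormedSpace Function

/-- `u` is a finite-rank operator: its range is finite-dimensional. -/
def FinRankOp {X Y : Type*} [NormedAddCommGroup X] [NormedSpace ℝ X]
    [NormedAddCommGroup Y] [NormedSpace ℝ Y] (u : X →L[ℝ] Y) : Prop :=
  FiniteDimensional ℝ (LinearMap.range (u : X →ₗ[ℝ] Y))

/-- `u` is approximable: a limit in operator norm of finite-rank operators. -/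
def ApproxOp {X Y : Type*} [NormedAddCommGroup X] [NormedSpace ℝ X]
    [NormedAddCommGroup Y] [NormedSpace ℝ Y] (u : X →L[ℝ] Y) : Prop :=
  u ∈ closure {f : X →L[ℝ] Y | FinRankOp f}

/-- `u` is a compact operator: it maps the closed unit ball to a relatively compact set. -/
def CompactOp {X Y : Type*} [NormedAddCommGroup X] [NormedSpace ℝ X]
    [NormedAddCommGroup Y] [NormedSpace ℝ Y] (u : X →L[ℝ] Y) : Prop :=
  IsCompact (closure (u '' Metric.closedBall 0 1))

/-- `Y` has the approximation property (AP). -/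
def HasAP (Y : Type*) [NormedAddCommGroup Y] [NormedSpace ℝ Y] : Prop :=
  ∀ K : Set Y, IsCompact K → ∀ ε : ℝ, 0 < ε →
    ∃ u : Y →L[ℝ] Y, FinRankOp u ∧ ∀ x ∈ K, ‖u x - x‖ < ε

/-- `Y` has the λ-bounded approximation property (λ-BAP). -/
def HasBAP (Y : Type*) [NormedAddCommGroup Y] [NormedSpace ℝ Y] (l : ℝ) : Prop :=
  ∀ K : Set Y, IsCompact K → ∀ ε : ℝ, 0 < ε →
    ∃ u : Y →L[ℝ] Y, FinRankOp u ∧ ‖u‖ ≤ l ∧ ∀ x ∈ K, ‖u x - x‖ < ε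

/-- `Y` has the λ-bounded compact approximation property (λ-BCAP). -/
def HasBCAP (Y : Type*) [NormedAddCommGroup Y] [NormedSpace ℝ Y] (l : ℝ) : Prop :=
  ∀ K : Set Y, IsCompact K → ∀ ε : ℝ, 0 < ε →
    ∃ u : Y →L[ℝ] Y, CompactOp u ∧ ‖u‖ ≤ l ∧ ∀ x ∈ K, ‖u x - x‖ < ε

/-!
If `X` has the AP, a compact operator `u` is a norm limit of finite-rank operators: approximate the
identity uniformly on the compact set `closure (u '' closedBall 0 1)` by a finite-rank `v`, then
`v ∘ u` is close to `u` in operator norm. Given the λ-BCAP, pick a compact `u` with `‖u‖ ≤ λ` that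
is close to the identity on a compact set, approximate it by a finite-rank `w`, and rescale `w`
radially into the ball of radius `λ`; this moves `w` by at most `‖w - u‖`, so the result is still
close to the identity on the compact set.
-/

theorem exists_smul_norm_le_of_norm_sub_le {E : Type*} [NormedAddCommGroup E] [NormedSpace ℝ E]
    {u w : E} {l : ℝ} (hu : ‖u‖ ≤ l) :
    ∃ c : ℝ, ‖c • w‖ ≤ l ∧ ‖c • w - w‖ ≤ ‖w - u‖ := by
  rcases le_or_gt ‖w‖ l with hw | hw
  · exact ⟨1, by simpa using hw, by simp⟩
  have hw0 : 0 < ‖w‖ := (norm_nonneg u).trans_lt (hu.trans_lt hw)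
  have hl : 0 ≤ l := (norm_nonneg u).trans hu
  refine ⟨l / ‖w‖, ?_, ?_⟩
  · rw [norm_smul, Real.norm_of_nonneg (by positivity), div_mul_cancel₀ _ hw0.ne']
  · have hc : 0 ≤ 1 - l / ‖w‖ := by rw [sub_nonneg, div_le_one hw0]; exact hw.le
    calc ‖(l / ‖w‖) • w - w‖ = ‖(1 - l / ‖w‖) • w‖ := by rw [sub_smul, one_smul, norm_sub_rev]
      _ = ‖w‖ - l := by
          rw [norm_smul, Real.norm_of_nonneg hc, sub_mul, one_mul, div_mul_cancel₀ _ hw0.ne']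
      _ ≤ ‖w‖ - ‖u‖ := by linarith
      _ ≤ ‖w - u‖ := norm_sub_norm_le w u

section Operators

variable {X Y : Type*} [NormedAddCommGroup X] [NormedSpace ℝ X]
  [NormedAddCommGroup Y] [NormedSpace ℝ Y]

theorem FinRankOp.comp {Z : Type*} [NormedAddCommGroup Z] [NormedSpace ℝ Z]
    {v : Y →L[ℝ] Z} (hv : FinRankOp v) (u : X →L[ℝ] Y) : FinRankOp (v.comp u) := by
  have : FiniteDimensional ℝ (LinearMap.range (v : Y →ₗ[ℝ] Z)) := hv
  unfold FinRankOp
  rw [ContinuousLinearMap.toLinearMap_comp]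
  exact Submodule.finiteDimensional_of_le (LinearMap.range_comp_le_range _ _)

theorem FinRankOp.smul {w : X →L[ℝ] Y} (hw : FinRankOp w) (c : ℝ) : FinRankOp (c • w) :=
  have : FiniteDimensional ℝ (LinearMap.range (w : X →ₗ[ℝ] Y)) := hw
  Submodule.finiteDimensional_of_le (LinearMap.range_smul_le_range (w : X →ₗ[ℝ] Y) c)

theorem FinRankOp.compactOp {u : X →L[ℝ] Y} (hu : FinRankOp u) : CompactOp u := by
  have : FiniteDimensional ℝ (LinearMap.range (u : X →ₗ[ℝ] Y)) := hu
  let u' : X →L[ℝ] LinearMap.range (u : X →ₗ[ℝ] Y) :=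
    u.codRestrict _ (LinearMap.mem_range_self (u : X →ₗ[ℝ] Y))
  have hu' : IsCompactOperator u :=
    (isCompactOperator_of_locallyCompactSpace_dom u').continuous_comp continuous_subtype_val
  exact hu'.isCompact_closure_image_closedBall 1

theorem HasAP.approxOp (hX : HasAP Y) {u : X →L[ℝ] Y} (hu : CompactOp u) : ApproxOp u := by
  refine Metric.mem_closure_iff.2 fun ε hε => ?_
  obtain ⟨v, hv, hvK⟩ := hX _ hu (ε / 2) (half_pos hε)
  refine ⟨v.comp u, hv.comp u, ?_⟩
  have hvu : ‖v.comp u - u‖ ≤ ε / 2 := by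
    refine ContinuousLinearMap.opNorm_le_of_unit_norm (half_pos hε).le fun x hx => ?_
    exact (hvK (u x) (subset_closure ⟨x, by simp [hx], rfl⟩)).le
  rw [dist_comm, dist_eq_norm]
  linarith

theorem ApproxOp.exists_finRankOp_norm_le {u : X →L[ℝ] Y} (hu : ApproxOp u) {l : ℝ}
    (hul : ‖u‖ ≤ l) {δ : ℝ} (hδ : 0 < δ) :
    ∃ v : X →L[ℝ] Y, FinRankOp v ∧ ‖v‖ ≤ l ∧ ‖v - u‖ < δ := by
  obtain ⟨w, hw, hwu⟩ := Metric.mem_closure_iff.1 hu (δ / 2) (half_pos hδ)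
  rw [dist_comm, dist_eq_norm] at hwu
  obtain ⟨c, hcl, hcw⟩ := exists_smul_norm_le_of_norm_sub_le (w := w) hul
  refine ⟨c • w, hw.smul c, hcl, ?_⟩
  calc ‖c • w - u‖ ≤ ‖c • w - w‖ + ‖w - u‖ := norm_sub_le_norm_sub_add_norm_sub _ _ _
    _ < δ := by linarith

theorem HasBAP.hasAP {l : ℝ} (h : HasBAP X l) : HasAP X := fun K hK ε hε =>
  let ⟨u, hu, _, huK⟩ := h K hK ε hε
  ⟨u, hu, huK⟩

theorem HasBAP.hasBCAP {l : ℝ} (h : HasBAP X l) : HasBCAP X l := fun K hK ε hε =>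
  let ⟨u, hu, hul, huK⟩ := h K hK ε hε
  ⟨u, hu.compactOp, hul, huK⟩

end Operators

theorem bap_iff_ap_and_bcap_general (X : Type u) [NormedAddCommGroup X] [NormedSpace ℝ X]
    (l : ℝ) :
    HasBAP X l ↔ (HasAP X ∧ HasBCAP X l) := by
  refine ⟨fun h => ⟨h.hasAP, h.hasBCAP⟩, fun ⟨hap, hbcap⟩ K hK ε hε => ?_⟩
  obtain ⟨R, hR, hKR⟩ := hK.isBounded.exists_pos_norm_le
  obtain ⟨u, hu, hul, huK⟩ := hbcap K hK (ε / 2) (half_pos hε)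
  obtain ⟨v, hv, hvl, hvu⟩ :=
    (hap.approxOp hu).exists_finRankOp_norm_le hul (δ := ε / (2 * R)) (by positivity)
  refine ⟨v, hv, hvl, fun x hx => ?_⟩
  have hvux : ‖(v - u) x‖ ≤ ε / 2 :=
    calc ‖(v - u) x‖ ≤ ‖v - u‖ * R :=
          ((v - u).le_opNorm x).trans (by gcongr; exact hKR x hx)
      _ ≤ ε / (2 * R) * R := by gcongr
      _ = ε / 2 := by field_simp
  calc ‖v x - x‖ ≤ ‖(v - u) x‖ + ‖u x - x‖ := by
        rw [sub_apply]
        exact norm_sub_le_norm_sub_add_norm_sub _ _ _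
    _ < ε := by linarith [huK x hx]

/-- `X` has λ-BAP iff `X` has AP and λ-BCAP. -/
theorem bap_iff_ap_and_bcap (X : Type u) [NormedAddCommGroup X] [NormedSpace ℝ X]
    [CompleteSpace X] (l : ℝ) (hl : 1 ≤ l) :
    HasBAP X l ↔ (HasAP X ∧ HasBCAP X l) :=
  bap_iff_ap_and_bcap_general X l
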